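/- Let Y = XC^T where X ∈ ℝ^{n×d} has full column rank d, and suppose Y has SVD Y = UΣV^T. Then β_RRR := C^T V_r V_r^T minimizes ‖Y − Xβ‖_F^2 over all β ∈ ℝ^{d×m} with rank(β) ≤ r, where V_r consists of the first r right singular vectors of Y (assuming the r-th and (r+1)-th singular values of Y are distinct). -/

import Mathlib

/-!
Conjugating by the orthogonal factors of the SVD reduces everything to the diagonal matrix `S`.
The candidate becomes `S` with only its first `r` columns kept, with error `∑_{j ≥ r} σⱼ²`,
while a competitor of rank at most `r` becomes `W B` where `W` has `t ≤ r` orthonormal columns.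
Column `j` of `S - W B` has squared norm at least `σⱼ² (1 - pⱼ)`, where `pⱼ` is the squared norm
of row `j` of `W`; these weights satisfy `0 ≤ pⱼ ≤ 1` and `∑ pⱼ = t ≤ r`, so since `σⱼ²` decreases,
`∑ σⱼ² (1 - pⱼ) ≥ ∑_{j ≥ r} σⱼ²`.
-/

open Matrix

def frobSq {n m : ℕ} (M : Matrix (Fin n) (Fin m) ℝ) : ℝ :=
  ∑ i, ∑ j, (M i j) ^ 2

open Finset

lemma frobSq_eq_trace {n m : ℕ} (M : Matrix (Fin n) (Fin m) ℝ) : frobSq M = trace (Mᵀ * M) := by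
  simp only [frobSq, trace, Matrix.diag, mul_apply, transpose_apply, sq]
  exact sum_comm

lemma frobSq_transpose {n m : ℕ} (M : Matrix (Fin n) (Fin m) ℝ) : frobSq Mᵀ = frobSq M := by
  rw [frobSq_eq_trace, frobSq_eq_trace, transpose_transpose, trace_mul_comm]

lemma frobSq_mul_left {n n' m : ℕ} {P : Matrix (Fin n') (Fin n) ℝ} (hP : Pᵀ * P = 1)
    (M : Matrix (Fin n) (Fin m) ℝ) : frobSq (P * M) = frobSq M := by
  rw [frobSq_eq_trace, frobSq_eq_trace, transpose_mul, Matrix.mul_assoc, ← Matrix.mul_assoc Pᵀ, hP,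
    Matrix.one_mul]

lemma frobSq_mul_right {n m m' : ℕ} {Q : Matrix (Fin m) (Fin m') ℝ} (hQ : Q * Qᵀ = 1)
    (M : Matrix (Fin n) (Fin m) ℝ) : frobSq (M * Q) = frobSq M := by
  rw [← frobSq_transpose, transpose_mul, frobSq_mul_left (by rwa [transpose_transpose]),
    frobSq_transpose]

lemma frobSq_eq_sum_col {n m : ℕ} (M : Matrix (Fin n) (Fin m) ℝ) :
    frobSq M = ∑ j, M.col j ⬝ᵥ M.col j := by
  simp only [frobSq, dotProduct, col_apply, sq]
  exact sum_comm

lemma col_mul {n t m : ℕ} (W : Matrix (Fin n) (Fin t) ℝ) (B : Matrix (Fin t) (Fin m) ℝ)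
    (j : Fin m) : (W * B).col j = W *ᵥ B.col j := by
  ext i
  simp [mul_apply, mulVec, dotProduct]

section OrthonormalColumns

variable {n t : ℕ} {W : Matrix (Fin n) (Fin t) ℝ}

lemma mulVec_dotProduct_mulVec_self (hW : Wᵀ * W = 1) (c : Fin t → ℝ) :
    W *ᵥ c ⬝ᵥ W *ᵥ c = c ⬝ᵥ c := by
  rw [dotProduct_mulVec, ← vecMul_transpose, vecMul_vecMul, hW, vecMul_one]

lemma sum_row_dotProduct_self (hW : Wᵀ * W = 1) : ∑ i, W i ⬝ᵥ W i = t := by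
  have := frobSq_eq_trace W
  rw [hW, trace_one, Fintype.card_fin] at this
  rw [← this]
  simp only [frobSq, dotProduct, sq]

lemma row_dotProduct_self_le_one (hW : Wᵀ * W = 1) (i : Fin n) : W i ⬝ᵥ W i ≤ 1 := by
  have hsq : (W i ⬝ᵥ W i) ^ 2 ≤ W i ⬝ᵥ W i :=
    calc (W i ⬝ᵥ W i) ^ 2 = (W *ᵥ W i) i ^ 2 := rfl
      _ ≤ W *ᵥ W i ⬝ᵥ W *ᵥ W i := by
        simpa only [dotProduct, sq] using
          single_le_sum (f := fun k => (W *ᵥ W i) k ^ 2) (fun k _ => sq_nonneg _) (mem_univ i)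
      _ = W i ⬝ᵥ W i := mulVec_dotProduct_mulVec_self hW _
  nlinarith [dotProduct_self_star_nonneg (W i)]

/-- `s² (1 - ‖Wᵢ‖²)` is the squared distance from `s • eᵢ` to the column space of `W`. -/
lemma sq_mul_one_sub_le (hW : Wᵀ * W = 1) (i : Fin n) (s : ℝ) (c : Fin t → ℝ) :
    s ^ 2 * (1 - W i ⬝ᵥ W i) ≤ (Pi.single i s - W *ᵥ c) ⬝ᵥ (Pi.single i s - W *ᵥ c) := by
  have hexpand : (Pi.single i s - W *ᵥ c) ⬝ᵥ (Pi.single i s - W *ᵥ c)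
      = s ^ 2 - 2 * s * (W i ⬝ᵥ c) + c ⬝ᵥ c := by
    rw [sub_dotProduct, dotProduct_sub, dotProduct_sub, mulVec_dotProduct_mulVec_self hW,
      dotProduct_comm (W *ᵥ c), single_dotProduct, single_dotProduct]
    simp only [Pi.single_eq_same]
    change _ = s ^ 2 - 2 * s * (W *ᵥ c) i + _
    ring
  have hcs : (W i ⬝ᵥ c) ^ 2 ≤ (W i ⬝ᵥ W i) * (c ⬝ᵥ c) := by
    simpa only [dotProduct, sq] using sum_mul_sq_le_sq_mul_sq univ (W i) c
  have hp := dotProduct_self_star_nonneg (W i)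
  have hc := dotProduct_self_star_nonneg c
  simp only [star_trivial] at hp hc
  -- AM-GM: `|2 s ⟨Wᵢ, c⟩| ≤ 2 √(s² ‖Wᵢ‖² ‖c‖²) ≤ s² ‖Wᵢ‖² + ‖c‖²`
  have hsq : (2 * s * (W i ⬝ᵥ c)) ^ 2 ≤ (s ^ 2 * (W i ⬝ᵥ W i) + c ⬝ᵥ c) ^ 2 := by
    nlinarith [sq_nonneg (s ^ 2 * (W i ⬝ᵥ W i) - c ⬝ᵥ c), sq_nonneg s]
  have := (abs_le_of_sq_le_sq' hsq (by positivity)).2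
  rw [hexpand]
  linarith

end OrthonormalColumns

lemma exists_transpose_mul_self_eq_one_mul_eq {n m : ℕ} (G : Matrix (Fin n) (Fin m) ℝ) :
    ∃ (W : Matrix (Fin n) (Fin G.rank) ℝ) (B : Matrix (Fin G.rank) (Fin m) ℝ),
      Wᵀ * W = 1 ∧ G = W * B := by
  let K := Submodule.span ℝ (Set.range fun j => WithLp.toLp 2 (G.col j))
  have hK : Module.finrank ℝ K = G.rank := by
    rw [rank_eq_finrank_span_cols, ← LinearEquiv.finrank_map_eq (WithLp.linearEquiv 2 ℝ _),
      Submodule.map_span, ← Set.range_comp]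
    rfl
  let b : OrthonormalBasis (Fin G.rank) ℝ K := (stdOrthonormalBasis ℝ K).reindex (finCongr hK)
  let v : Fin m → K := fun j => ⟨WithLp.toLp 2 (G.col j), Submodule.subset_span ⟨j, rfl⟩⟩
  refine ⟨of fun i k => (b k : EuclideanSpace ℝ (Fin n)) i, of fun k j => b.repr (v j) k, ?_, ?_⟩
  · ext k l
    have := congrFun (congrFun (gram_eq_one_iff_orthonormal.2 b.orthonormal) k) l
    rw [gram_apply, Submodule.coe_inner, EuclideanSpace.inner_eq_star_dotProduct] at this
    simpa [mul_apply, dotProduct, mul_comm] using this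
  · ext i j
    have := congrArg (fun x : K => (x : EuclideanSpace ℝ (Fin n)) i) (b.sum_repr (v j))
    simpa [mul_apply, v, mul_comm] using this.symm

lemma sum_range_le_sum_range_of_eq_zero {f : ℕ → ℝ} {n : ℕ} (hf0 : ∀ j, 0 ≤ f j)
    (hf : ∀ j, n ≤ j → f j = 0) (N : ℕ) : ∑ j ∈ range N, f j ≤ ∑ j ∈ range n, f j :=
  calc ∑ j ∈ range N, f j ≤ ∑ j ∈ range (N + n), f j :=
        sum_le_sum_of_subset_of_nonneg (range_subset_range.2 (by omega)) fun j _ _ => hf0 j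
    _ = ∑ j ∈ range n, f j := by
        rw [← sum_range_add_sum_Ico f (by omega : n ≤ N + n),
          sum_eq_zero fun j hj => hf j (mem_Ico.1 hj).1, add_zero]

lemma sum_Ico_le_sum_mul_one_sub {a p : ℕ → ℝ} {r N : ℕ} (hrN : r ≤ N) (ha : Antitone a)
    (ha0 : 0 ≤ a (r - 1)) (hp0 : ∀ j, 0 ≤ p j) (hp1 : ∀ j, p j ≤ 1)
    (hp : ∑ j ∈ range N, p j ≤ r) :
    ∑ j ∈ Ico r N, a j ≤ ∑ j ∈ range N, a j * (1 - p j) := by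
  set c := a (r - 1)
  have hhead : ∀ j ∈ range r, c * (1 - p j) ≤ a j * (1 - p j) := fun j hj =>
    mul_le_mul_of_nonneg_right (ha (by simp at hj; omega)) (sub_nonneg.2 (hp1 j))
  have htail : ∀ j ∈ Ico r N, a j - c * p j ≤ a j * (1 - p j) := fun j hj => by
    nlinarith [mul_le_mul_of_nonneg_right (ha (by simp at hj; omega) : a j ≤ c) (hp0 j)]
  calc ∑ j ∈ Ico r N, a j ≤ ∑ j ∈ Ico r N, a j + c * (r - ∑ j ∈ range N, p j) :=
        le_add_of_nonneg_right (mul_nonneg ha0 (sub_nonneg.2 hp))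
    _ = ∑ j ∈ range r, c * (1 - p j) + ∑ j ∈ Ico r N, (a j - c * p j) := by
        rw [← sum_range_add_sum_Ico p hrN]
        simp only [sum_sub_distrib, ← mul_sum, sum_const, card_range, nsmul_eq_mul]
        ring
    _ ≤ ∑ j ∈ range r, a j * (1 - p j) + ∑ j ∈ Ico r N, a j * (1 - p j) :=
        add_le_add (sum_le_sum hhead) (sum_le_sum htail)
    _ = ∑ j ∈ range N, a j * (1 - p j) := sum_range_add_sum_Ico _ hrN

lemma antitone_ite_lt_sq {σ : ℕ → ℝ} (hσ0 : ∀ i, 0 ≤ σ i) (hσ : Antitone σ) (n : ℕ) :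
    Antitone fun j => if j < n then σ j ^ 2 else 0 := fun i j hij => by
  by_cases hj : j < n
  · simp only [if_pos hj, if_pos (hij.trans_lt hj)]
    exact pow_le_pow_left₀ (hσ0 j) (hσ hij) 2
  · simp only [if_neg hj]
    split_ifs <;> positivity

def truncProj (m r : ℕ) : Matrix (Fin m) (Fin m) ℝ :=
  diagonal fun j => if (j : ℕ) < r then 1 else 0

lemma submatrix_castLE_mul_transpose {m r : ℕ} (h : r ≤ m) (V : Matrix (Fin m) (Fin m) ℝ) :
    V.submatrix id (Fin.castLE h) * (V.submatrix id (Fin.castLE h))ᵀ = V * truncProj m r * Vᵀ := by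
  ext i j
  rw [mul_apply, mul_apply]
  simp only [truncProj, mul_diagonal, submatrix_apply, id, transpose_apply]
  refine sum_of_injOn (Fin.castLE h) (Fin.castLE_injective h).injOn (by simp) (fun k _ hk => ?_)
    (fun k _ => by simp)
  have : ¬ (k : ℕ) < r := fun hkr => hk ⟨⟨k, hkr⟩, by simp, rfl⟩
  simp [this]

section Diagonal

variable {n m : ℕ} {σ : ℕ → ℝ} {S : Matrix (Fin n) (Fin m) ℝ}

lemma col_eq_single (hS : ∀ i j, S i j = if (i : ℕ) = (j : ℕ) then σ i else 0)
    (j : Fin m) (hj : (j : ℕ) < n) : S.col j = Pi.single ⟨j, hj⟩ (σ j) := by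
  ext i
  obtain rfl | h := eq_or_ne i ⟨j, hj⟩
  · simp [hS]
  · simp [hS, h, Fin.ext_iff.not.1 h]

lemma col_eq_zero (hS : ∀ i j, S i j = if (i : ℕ) = (j : ℕ) then σ i else 0)
    (j : Fin m) (hj : n ≤ (j : ℕ)) : S.col j = 0 := by
  ext i
  rw [col_apply, hS, if_neg (by omega), Pi.zero_apply]

lemma col_dotProduct_self (hS : ∀ i j, S i j = if (i : ℕ) = (j : ℕ) then σ i else 0)
    (j : Fin m) : S.col j ⬝ᵥ S.col j = if (j : ℕ) < n then σ j ^ 2 else 0 := by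
  split_ifs with hj
  · simp [col_eq_single hS j hj, sq]
  · simp [col_eq_zero hS j (not_lt.1 hj)]

lemma frobSq_sub_mul_truncProj (hS : ∀ i j, S i j = if (i : ℕ) = (j : ℕ) then σ i else 0)
    {r : ℕ} (hrm : r ≤ m) :
    frobSq (S - S * truncProj m r) = ∑ j ∈ Ico r m, if j < n then σ j ^ 2 else 0 := by
  have hcol : ∀ j : Fin m, (S - S * truncProj m r).col j = if (j : ℕ) < r then 0 else S.col j := by
    intro j; ext i
    simp only [col_apply, Matrix.sub_apply, truncProj, mul_diagonal]
    split_ifs <;> simp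
  simp only [frobSq_eq_sum_col, hcol, apply_ite (fun v : Fin n → ℝ => v ⬝ᵥ v), zero_dotProduct,
    col_dotProduct_self hS]
  rw [Fin.sum_univ_eq_sum_range (fun j => if j < r then (0 : ℝ) else if j < n then σ j ^ 2 else 0),
    ← sum_range_add_sum_Ico _ hrm, sum_eq_zero fun j hj => if_pos (mem_range.1 hj), zero_add]
  exact sum_congr rfl fun j hj => if_neg (not_lt.2 (mem_Ico.1 hj).1)

lemma sq_mul_one_sub_le_col_sub_mul (hS : ∀ i j, S i j = if (i : ℕ) = (j : ℕ) then σ i else 0)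
    {t : ℕ} {W : Matrix (Fin n) (Fin t) ℝ} (hW : Wᵀ * W = 1) (B : Matrix (Fin t) (Fin m) ℝ)
    (j : Fin m) (hj : (j : ℕ) < n) :
    σ j ^ 2 * (1 - W ⟨j, hj⟩ ⬝ᵥ W ⟨j, hj⟩) ≤ (S - W * B).col j ⬝ᵥ (S - W * B).col j := by
  have hcol : (S - W * B).col j = Pi.single ⟨j, hj⟩ (σ j) - W *ᵥ B.col j := by
    rw [← col_eq_single hS j hj, ← col_mul]
    rfl
  rw [hcol]
  exact sq_mul_one_sub_le hW _ _ _

theorem frobSq_sub_mul_truncProj_le {r : ℕ} (hrm : r ≤ m) (hσ0 : ∀ i, 0 ≤ σ i)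
    (hσ : Antitone σ) (hS : ∀ i j, S i j = if (i : ℕ) = (j : ℕ) then σ i else 0)
    (G : Matrix (Fin n) (Fin m) ℝ) (hG : G.rank ≤ r) :
    frobSq (S - S * truncProj m r) ≤ frobSq (S - G) := by
  obtain ⟨W, B, hW, hWB⟩ := exists_transpose_mul_self_eq_one_mul_eq G
  set a : ℕ → ℝ := fun j => if j < n then σ j ^ 2 else 0
  -- the squared row norms of `W`, indexed by columns of `S` and extended by zero past `n`
  set p : ℕ → ℝ := fun j => if h : j < n then W ⟨j, h⟩ ⬝ᵥ W ⟨j, h⟩ else 0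
  have hp0 : ∀ j, 0 ≤ p j := fun j => by
    simp only [p]; split_ifs
    · simpa using dotProduct_self_star_nonneg (W _)
    · exact le_rfl
  have hp1 : ∀ j, p j ≤ 1 := fun j => by
    simp only [p]; split_ifs
    · exact row_dotProduct_self_le_one hW _
    · exact zero_le_one
  have hp : ∑ j ∈ range m, p j ≤ r := by
    refine (sum_range_le_sum_range_of_eq_zero hp0 (fun j hj => dif_neg (not_lt.2 hj)) m).trans ?_
    rw [← Fin.sum_univ_eq_sum_range]
    simpa [p, sum_row_dotProduct_self hW] using hG
  have hcol : ∀ j : Fin m, a j * (1 - p j) ≤ (S - W * B).col j ⬝ᵥ (S - W * B).col j := fun j => by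
    by_cases hj : (j : ℕ) < n
    · simpa [a, p, hj] using sq_mul_one_sub_le_col_sub_mul hS hW B j hj
    · simpa [a, hj] using dotProduct_self_star_nonneg ((S - W * B).col j)
  calc frobSq (S - S * truncProj m r) = ∑ j ∈ Ico r m, a j := frobSq_sub_mul_truncProj hS hrm
    _ ≤ ∑ j ∈ range m, a j * (1 - p j) :=
        sum_Ico_le_sum_mul_one_sub hrm (antitone_ite_lt_sq hσ0 hσ n) (by positivity) hp0 hp1 hp
    _ = ∑ j : Fin m, a j * (1 - p j) := (Fin.sum_univ_eq_sum_range (fun j => a j * (1 - p j)) m).symm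
    _ ≤ frobSq (S - G) := by
        rw [hWB, frobSq_eq_sum_col]
        exact sum_le_sum fun j _ => hcol j

end Diagonal

section SVD

variable {n m : ℕ} {U : Matrix (Fin n) (Fin n) ℝ} {V : Matrix (Fin m) (Fin m) ℝ}
  {S Y : Matrix (Fin n) (Fin m) ℝ}

lemma transpose_mul_mul_eq_of_svd (hU : Uᵀ * U = 1) (hV : Vᵀ * V = 1) (hSVD : Y = U * S * Vᵀ) :
    Uᵀ * Y * V = S := by
  rw [hSVD, Matrix.mul_assoc, Matrix.mul_assoc, hV, Matrix.mul_one, ← Matrix.mul_assoc, hU,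
    Matrix.one_mul]

lemma frobSq_sub_eq_of_svd (hU : Uᵀ * U = 1) (hU' : U * Uᵀ = 1) (hV : Vᵀ * V = 1)
    (hV' : V * Vᵀ = 1) (hSVD : Y = U * S * Vᵀ) (B : Matrix (Fin n) (Fin m) ℝ) :
    frobSq (Y - B) = frobSq (S - Uᵀ * B * V) := by
  rw [← transpose_mul_mul_eq_of_svd hU hV hSVD, ← Matrix.sub_mul, ← Matrix.mul_sub,
    frobSq_mul_right hV', frobSq_mul_left (by rwa [transpose_transpose])]

end SVD

theorem stmt5_general (n d m r : ℕ) (hrm : r ≤ m)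
    (X : Matrix (Fin n) (Fin d) ℝ)
    (C : Matrix (Fin m) (Fin d) ℝ)
    (Y : Matrix (Fin n) (Fin m) ℝ) (hY : Y = X * Cᵀ)
    (U : Matrix (Fin n) (Fin n) ℝ) (V : Matrix (Fin m) (Fin m) ℝ)
    (S : Matrix (Fin n) (Fin m) ℝ) (σ : ℕ → ℝ)
    (hU : Uᵀ * U = 1) (hU' : U * Uᵀ = 1)
    (hV : Vᵀ * V = 1) (hV' : V * Vᵀ = 1)
    (hS : ∀ (i : Fin n) (j : Fin m), S i j = if (i : ℕ) = (j : ℕ) then σ i else 0)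
    (hσnonneg : ∀ i, 0 ≤ σ i) (hσmono : ∀ i j, i ≤ j → σ j ≤ σ i)
    (hSVD : Y = U * S * Vᵀ)
    (Vr : Matrix (Fin m) (Fin r) ℝ)
    (hVr : Vr = V.submatrix id (Fin.castLE hrm)) :
    ∀ β : Matrix (Fin d) (Fin m) ℝ, β.rank ≤ r →
      frobSq (Y - X * (Cᵀ * Vr * Vrᵀ)) ≤ frobSq (Y - X * β) := by
  intro β hβ
  have hcandidate : Uᵀ * (X * (Cᵀ * Vr * Vrᵀ)) * V = S * truncProj m r := by
    rw [hVr, Matrix.mul_assoc Cᵀ, submatrix_castLE_mul_transpose, ← Matrix.mul_assoc X, ← hY,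
      ← transpose_mul_mul_eq_of_svd hU hV hSVD]
    simp only [Matrix.mul_assoc, hV, Matrix.mul_one]
  have hrank : (Uᵀ * (X * β) * V).rank ≤ r :=
    (rank_mul_le_left _ _).trans <| (rank_mul_le_right _ _).trans <|
      (rank_mul_le_right _ _).trans hβ
  calc frobSq (Y - X * (Cᵀ * Vr * Vrᵀ)) = frobSq (S - S * truncProj m r) := by
        rw [frobSq_sub_eq_of_svd hU hU' hV hV' hSVD, hcandidate]
    _ ≤ frobSq (S - Uᵀ * (X * β) * V) :=
        frobSq_sub_mul_truncProj_le hrm hσnonneg hσmono hS _ hrank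
    _ = frobSq (Y - X * β) := (frobSq_sub_eq_of_svd hU hU' hV hV' hSVD _).symm

/-- With `Y = X Cᵀ`, `X` of full column rank `d`, and SVD `Y = U Σ Vᵀ`
(singular values `σ` in decreasing order, with the `r`-th strictly distinct from the
`(r+1)`-th), the reduced-rank regression solution `β_RRR = Cᵀ V_r V_rᵀ` minimizes
`‖Y − Xβ‖_F²` over all `β` with `rank β ≤ r`. -/
theorem stmt5 (n d m r : ℕ) (hrn : r ≤ n) (hrm : r ≤ m)
    (X : Matrix (Fin n) (Fin d) ℝ) (hX : X.rank = d)
    (C : Matrix (Fin m) (Fin d) ℝ)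
    (Y : Matrix (Fin n) (Fin m) ℝ) (hY : Y = X * Cᵀ)
    (U : Matrix (Fin n) (Fin n) ℝ) (V : Matrix (Fin m) (Fin m) ℝ)
    (S : Matrix (Fin n) (Fin m) ℝ) (σ : ℕ → ℝ)
    (hU : Uᵀ * U = 1) (hU' : U * Uᵀ = 1)
    (hV : Vᵀ * V = 1) (hV' : V * Vᵀ = 1)
    (hS : ∀ (i : Fin n) (j : Fin m), S i j = if (i : ℕ) = (j : ℕ) then σ i else 0)
    (hσnonneg : ∀ i, 0 ≤ σ i) (hσmono : ∀ i j, i ≤ j → σ j ≤ σ i)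
    (hgap : σ (r - 1) ≠ σ r)
    (hSVD : Y = U * S * Vᵀ)
    (Vr : Matrix (Fin m) (Fin r) ℝ)
    (hVr : Vr = V.submatrix id (Fin.castLE hrm)) :
    ∀ β : Matrix (Fin d) (Fin m) ℝ, β.rank ≤ r →
      frobSq (Y - X * (Cᵀ * Vr * Vrᵀ)) ≤ frobSq (Y - X * β) :=
  stmt5_general n d m r hrm X C Y hY U V S σ hU hU' hV hV' hS hσnonneg hσmono hSVD Vr hVr
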